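/- arXiv:0911.3355 — 2 statements merged into one kernel-verified Lean document; each statement's English description precedes it below -/
import Mathlib

section
/- Let k ≥ 2 and s ≥ 0 be integers and let w be a word of length n ≥ 2. Let D be the maximum over all j with 2 ≤ j ≤ n of the length of the longest common prefix of w and its suffix w[j..n]. If mp_s^k(w[1..D]) = +∞ (where w[1..D] is the prefix of w of length D), then either mp_s^k(w) = +∞ or (k−1) · mp_s^k(w) ≤ D < k · mp_s^k(w). -/
open List

/-- `x^k`: concatenation of `k` copies of the word `x`. -/
def listPow {α : Type*} (x : List α) (k : ℕ) : List α := (List.replicate k x).flatten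

/-- Minimal period `mp_s^k(u)` taking values in `ℕ∞`: the least `m > s` such that
the prefix of `u` of length `k*m` is the `k`-th power of the prefix of length `m`;
`⊤` if no such `m` exists. -/
noncomputable def minPeriod {α : Type*} (k s : ℕ) (u : List α) : ℕ∞ :=
  sInf {N : ℕ∞ | ∃ m : ℕ, N = (m : ℕ∞) ∧ s < m ∧ k * m ≤ u.length ∧
    listPow (u.take m) k <+: u}

/-- Length of the longest common prefix of two words. -/
def lcpLen {α : Type*} [DecidableEq α] (a b : List α) : ℕ :=
  ((a.zip b).takeWhile fun p => decide (p.1 = p.2)).length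

/-- The antimorphic involution on words induced by a letter map `f`. -/
def phi {α : Type*} (f : α → α) (u : List α) : List α := (u.map f).reverse

/-- Centralized maximal pseudo-palindrome array entry `cmp_w[i]`. -/
noncomputable def cmpArr {α : Type*} (f : α → α) (w : List α) (i : ℕ) : ℕ :=
  sSup {m : ℕ | m ≤ min i (w.length - i) ∧
    phi f ((w.drop (i - m)).take m) = (w.drop i).take m}

/-! Let `m = mp_s^k(w)` be finite and `x = w[1..m]`, so `x^k` is a prefix of `w`. Then `w` and
its suffix `w[m+1..n]` share the prefix `x^(k-1)`, whence `(k-1)m ≤ D`. If `km ≤ D`, then `x^k`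
would also be a prefix of `w[1..D]`, forcing `mp_s^k(w[1..D]) ≤ m < ∞`; hence `D < km`. -/

section Words

variable {α : Type*}

lemma listPow_length (x : List α) (k : ℕ) : (listPow x k).length = k * x.length := by
  simp [listPow, List.length_flatten, List.sum_replicate]

lemma listPow_succ (x : List α) (k : ℕ) : listPow x (k + 1) = x ++ listPow x k := by
  simp [listPow, List.replicate_succ]

lemma listPow_succ' (x : List α) (k : ℕ) : listPow x (k + 1) = listPow x k ++ x := by
  simp [listPow, List.replicate_succ']

lemma le_lcpLen_of_prefix [DecidableEq α] {p a b : List α} (ha : p <+: a) (hb : p <+: b) :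
    p.length ≤ lcpLen a b := by
  induction p generalizing a b with
  | nil => simp
  | cons c p ih =>
    obtain ⟨ta, rfl⟩ := ha
    obtain ⟨tb, rfl⟩ := hb
    simpa [lcpLen, List.takeWhile_cons] using
      ih (p.prefix_append ta) (p.prefix_append tb)

lemma le_lcpLen_drop_of_listPow_prefix [DecidableEq α] {x w : List α} {k : ℕ}
    (h : listPow x (k + 1) <+: w) : k * x.length ≤ lcpLen w (w.drop x.length) := by
  have hw : listPow x k <+: w := by
    rw [listPow_succ'] at h
    exact (List.prefix_append _ x).trans h
  have hdrop : listPow x k <+: w.drop x.length := by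
    rw [listPow_succ] at h
    simpa only [List.drop_left] using h.drop x.length
  simpa [listPow_length] using le_lcpLen_of_prefix hw hdrop

end Words

section MinPeriod

variable {α : Type*} {k s m D : ℕ} {u : List α}

lemma minPeriod_le (hs : s < m) (hk : k * m ≤ u.length) (h : listPow (u.take m) k <+: u) :
    minPeriod k s u ≤ m :=
  sInf_le ⟨m, rfl, hs, hk, h⟩

lemma exists_minPeriod_eq_coe (h : minPeriod k s u ≠ ⊤) :
    ∃ m : ℕ, minPeriod k s u = m ∧ s < m ∧ k * m ≤ u.length ∧ listPow (u.take m) k <+: u := by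
  have hne : {N : ℕ∞ | ∃ m : ℕ, N = (m : ℕ∞) ∧ s < m ∧ k * m ≤ u.length ∧
      listPow (u.take m) k <+: u}.Nonempty := by
    by_contra hempty
    exact h (by rw [minPeriod, Set.not_nonempty_iff_eq_empty.mp hempty, sInf_empty])
  obtain ⟨m, hm, hrest⟩ := csInf_mem hne
  exact ⟨m, hm, hrest⟩

lemma minPeriod_take_le (hk : 0 < k) (hs : s < m) (hu : k * m ≤ u.length) (hD : k * m ≤ D)
    (h : listPow (u.take m) k <+: u) : minPeriod k s (u.take D) ≤ m := by
  have hlen : (listPow (u.take m) k).length ≤ D :=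
    (listPow_length _ k).trans_le ((Nat.mul_le_mul_left k (List.length_take_le m u)).trans hD)
  have htake : (u.take D).take m = u.take m := by
    rw [List.take_take, min_eq_left (le_trans (Nat.le_mul_of_pos_left m hk) hD)]
  refine minPeriod_le hs (by simp [hu, hD]) ?_
  rw [htake]
  exact List.prefix_take_iff.mpr ⟨h, hlen⟩

end MinPeriod

theorem stmt3_general {α : Type*} [DecidableEq α] (k s : ℕ) (hk : 2 ≤ k) (w : List α)
    (D : ℕ)
    (hD : D = (Finset.Icc 2 w.length).sup fun j => lcpLen w (w.drop (j - 1)))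
    (h : minPeriod k s (w.take D) = ⊤) :
    minPeriod k s w = ⊤ ∨
      (((k - 1 : ℕ) : ℕ∞) * minPeriod k s w ≤ (D : ℕ∞) ∧
        (D : ℕ∞) < (k : ℕ∞) * minPeriod k s w) := by
  rcases eq_or_ne (minPeriod k s w) ⊤ with hw | hw
  · exact Or.inl hw
  obtain ⟨m, hm, hsm, hlen, hpow⟩ := exists_minPeriod_eq_coe hw
  have hm_lt : m < w.length := by nlinarith
  have lower : (k - 1) * m ≤ D := by
    have hj : m + 1 ∈ Finset.Icc 2 w.length := Finset.mem_Icc.mpr ⟨by omega, hm_lt⟩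
    calc (k - 1) * m = (k - 1) * (w.take m).length := by rw [List.length_take_of_le hm_lt.le]
      _ ≤ lcpLen w (w.drop (w.take m).length) :=
        le_lcpLen_drop_of_listPow_prefix (by rwa [Nat.sub_add_cancel (by omega)])
      _ ≤ D := by
        rw [hD, List.length_take_of_le hm_lt.le]
        exact Finset.le_sup (f := fun j => lcpLen w (w.drop (j - 1))) hj
  have upper : D < k * m := by
    by_contra! hle
    simpa [h] using minPeriod_take_le (by omega) hsm hlen hle hpow
  right
  rw [hm]
  exact ⟨mod_cast lower, mod_cast upper⟩

/-- with `D` the maximum over `2 ≤ j ≤ n` of the length of the longest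
common prefix of `w` and its suffix `w[j..n]`, if `mp_s^k(w[1..D]) = +∞` then either
`mp_s^k(w) = +∞` or `(k-1)·mp_s^k(w) ≤ D < k·mp_s^k(w)`. -/
theorem stmt3 {α : Type*} [DecidableEq α] (k s : ℕ) (hk : 2 ≤ k) (w : List α)
    (hn : 2 ≤ w.length) (D : ℕ)
    (hD : D = (Finset.Icc 2 w.length).sup fun j => lcpLen w (w.drop (j - 1)))
    (h : minPeriod k s (w.take D) = ⊤) :
    minPeriod k s w = ⊤ ∨
      (((k - 1 : ℕ) : ℕ∞) * minPeriod k s w ≤ (D : ℕ∞) ∧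
        (D : ℕ∞) < (k : ℕ∞) * minPeriod k s w) :=
  stmt3_general k s hk w D hD h
end

section
/- Let w be a word of length n over an alphabet Σ, let f : Σ → Σ be an involution and φ the induced antimorphic involution on words, and let £ ∈ Σ be a letter such that neither £ nor f(£) occurs in w. Set w̄ = w · £ · φ(w), a word of length 2n+1. Then for every i with 1 ≤ i ≤ n−1, the length of the longest common prefix of the suffixes w̄[i+1..2n+1] and w̄[2n−i+2..2n+1] equals cmp_w[i]. -/
open List

/-!
The suffix `w̄[2n−i+2..2n+1]` is `φ(w[1..i])`, whose prefix of length `m ≤ i` is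
`φ(w[i−m+1..i])`, while `w̄[i+1..2n+1] = w[i+1..n] · £ · φ(w)`. As `f(£)` does not occur in `w`,
the letter `£` does not occur in `φ(w[1..i])`, so a common prefix of the two suffixes stops
before the `£` and is a common prefix of `w[i+1..n]` and `φ(w[1..i])`: these are exactly the `m`
in the definition of `cmp_w[i]`.
-/

section LongestCommonPrefix

variable {α : Type*} [DecidableEq α]

lemma lcpLen_cons (x y : α) (a b : List α) :
    lcpLen (x :: a) (y :: b) = if x = y then lcpLen a b + 1 else 0 := by
  by_cases h : x = y <;> simp [lcpLen, h]

lemma take_lcpLen_eq (a b : List α) : a.take (lcpLen a b) = b.take (lcpLen a b) := by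
  induction a generalizing b with
  | nil => simp [lcpLen]
  | cons x a ih =>
    cases b with
    | nil => simp [lcpLen]
    | cons y b => by_cases h : x = y <;> simp [lcpLen_cons, h, ih]

lemma lcpLen_le_length_zip (a b : List α) : lcpLen a b ≤ (a.zip b).length :=
  (takeWhile_sublist _).length_le

lemma le_lcpLen_of_take_eq {a b : List α} {m : ℕ} (ha : m ≤ a.length) (hb : m ≤ b.length)
    (h : a.take m = b.take m) : m ≤ lcpLen a b := by
  induction m generalizing a b with
  | zero => exact Nat.zero_le _
  | succ m ih =>
    cases a with
    | nil => simp at ha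
    | cons x a =>
      cases b with
      | nil => simp at hb
      | cons y b =>
        simp only [take_succ_cons, cons.injEq] at h
        simp only [length_cons, Nat.succ_le_succ_iff] at ha hb
        rw [lcpLen_cons, if_pos h.1]
        exact Nat.succ_le_succ (ih ha hb h.2)

theorem isGreatest_lcpLen (a b : List α) :
    IsGreatest {m | m ≤ a.length ∧ m ≤ b.length ∧ a.take m = b.take m} (lcpLen a b) := by
  have hzip := lcpLen_le_length_zip a b
  rw [length_zip] at hzip
  exact ⟨⟨hzip.trans (min_le_left _ _), hzip.trans (min_le_right _ _), take_lcpLen_eq a b⟩,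
    fun _ ⟨ha, hb, h⟩ => le_lcpLen_of_take_eq ha hb h⟩

end LongestCommonPrefix

section Phi

variable {α : Type*} (f : α → α)

@[simp]
lemma length_phi (u : List α) : (phi f u).length = u.length := by simp [phi]

lemma take_phi (u : List α) (m : ℕ) : (phi f u).take m = phi f (u.drop (u.length - m)) := by
  simp [phi, take_reverse, map_drop]

lemma drop_phi (u : List α) (k : ℕ) : (phi f u).drop k = phi f (u.take (u.length - k)) := by
  simp [phi, drop_reverse, map_take]

lemma mem_phi_iff {f : α → α} (hf : Function.Involutive f) {a : α} {u : List α} :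
    a ∈ phi f u ↔ f a ∈ u := by
  simp only [phi, mem_reverse, mem_map]
  exact ⟨fun ⟨b, hb, hba⟩ => hba ▸ (hf b).symm ▸ hb, fun h => ⟨f a, h, hf a⟩⟩

lemma take_phi_take {u : List α} {i m : ℕ} (hi : i ≤ u.length) (hm : m ≤ i) :
    (phi f (u.take i)).take m = phi f ((u.drop (i - m)).take m) := by
  rw [take_phi, length_take_of_le hi, drop_take, Nat.sub_sub_self hm]

end Phi

section Mirror

variable {α : Type*}

lemma le_length_of_take_append_cons_eq {u v b : List α} {L : α} (hL : L ∉ b) {m : ℕ}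
    (h : (u ++ L :: v).take m = b.take m) : m ≤ u.length := by
  by_contra! hm
  have hmem : L ∈ (u ++ L :: v).take m := by
    obtain ⟨k, hk⟩ : ∃ k, m - u.length = k + 1 := ⟨m - u.length - 1, by omega⟩
    simp [take_append, hk]
  exact hL (mem_of_mem_take (h ▸ hmem))

variable (f : α → α) (w : List α) (L : α)

lemma drop_append_cons_phi_eq_phi_take {i : ℕ} (hi : i ≤ w.length) :
    (w ++ L :: phi f w).drop (2 * w.length - i + 1) = phi f (w.take i) := by
  have hidx : 2 * w.length - i + 1 = (w ++ [L]).length + (w.length - i) := by simp; omega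
  rw [append_cons, hidx, drop_length_add_append, drop_phi, Nat.sub_sub_self hi]

lemma take_append_cons_phi_eq_iff (hf : Function.Involutive f) (hfL : f L ∉ w)
    {i : ℕ} (hi : i ≤ w.length) (m : ℕ) :
    (m ≤ (w.drop i ++ L :: phi f w).length ∧ m ≤ (phi f (w.take i)).length ∧
        (w.drop i ++ L :: phi f w).take m = (phi f (w.take i)).take m) ↔
      m ≤ min i (w.length - i) ∧ phi f ((w.drop (i - m)).take m) = (w.drop i).take m := by
  have hL : L ∉ phi f (w.take i) := fun h => hfL (mem_of_mem_take ((mem_phi_iff hf).1 h))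
  simp only [length_append, length_drop, length_cons, length_phi, length_take_of_le hi,
    le_min_iff]
  constructor
  · rintro ⟨-, hmi, h⟩
    have hmn : m ≤ w.length - i := by
      simpa using le_length_of_take_append_cons_eq hL h
    rw [take_append_of_le_length (by simpa using hmn), take_phi_take f hi hmi] at h
    exact ⟨⟨hmi, hmn⟩, h.symm⟩
  · rintro ⟨⟨hmi, hmn⟩, h⟩
    refine ⟨by omega, hmi, ?_⟩
    rw [take_append_of_le_length (by simpa using hmn), take_phi_take f hi hmi, h]

end Mirror

theorem stmt8_general {α : Type*} [DecidableEq α] (f : α → α) (hf : Function.Involutive f)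
    (w : List α) (L : α) (hfL : f L ∉ w) :
    ∀ i, 1 ≤ i → i ≤ w.length - 1 →
      lcpLen ((w ++ L :: phi f w).drop i)
          ((w ++ L :: phi f w).drop (2 * w.length - i + 1)) = cmpArr f w i := by
  intro i _ hi
  have hin : i ≤ w.length := by omega
  rw [drop_append_of_le_length hin, drop_append_cons_phi_eq_phi_take f w L hin,
    ← (isGreatest_lcpLen _ _).csSup_eq, cmpArr]
  congr 1
  ext m
  exact take_append_cons_phi_eq_iff f w L hf hfL hin m

/-- for `w̄ = w·£·φ(w)` with `£` and `f(£)` not occurring in `w`,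
the longest common prefix of `w̄[i+1..2n+1]` and `w̄[2n−i+2..2n+1]` has length
`cmp_w[i]`, for `1 ≤ i ≤ n−1`. -/
theorem stmt8 {α : Type*} [DecidableEq α] (f : α → α) (hf : Function.Involutive f)
    (w : List α) (L : α) (hL : L ∉ w) (hfL : f L ∉ w) :
    ∀ i, 1 ≤ i → i ≤ w.length - 1 →
      lcpLen ((w ++ L :: phi f w).drop i)
          ((w ++ L :: phi f w).drop (2 * w.length - i + 1)) = cmpArr f w i :=
  stmt8_general f hf w L hfL
end
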